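/- Let W_α be a bounded unilateral weighted shift with positive weights (α_j)_{j≥0}. If W_α² is quasinormal, then the weight sequence α is periodic with period at most 2, i.e., α_{j+2} = α_j for all j ≥ 0. -/

import Mathlib

/-!
On basis vectors, `W² eⱼ = βⱼ e_{j+2}` with `βⱼ = αⱼ αⱼ₊₁` and `(W²)* W² eⱼ = βⱼ² eⱼ`, so
quasinormality of `W²` says exactly that `β` is 2-periodic. Then `ρⱼ = αⱼ₊₂ / αⱼ` satisfies
`ρⱼ ρⱼ₊₁ = 1`, hence is itself 2-periodic, so each parity class of `α` is a geometric sequence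
with ratio `ρⱼ`. Boundedness of `α` forces `ρⱼ ≤ 1` for every `j`, and `ρⱼ ρⱼ₊₁ = 1` then
forces `ρⱼ = 1`.
-/

noncomputable section

/-- The standard basis vectors of `ℓ²(ℕ)`. -/
def e (j : ℕ) : lp (fun _ : ℕ => ℂ) 2 := lp.single 2 j 1

theorem le_one_of_geometric_bddAbove {f : ℕ → ℝ} {r : ℝ} (h0 : 0 < f 0)
    (hf : ∀ n, f (n + 1) = r * f n) (hbdd : BddAbove (Set.range f)) : r ≤ 1 := by
  obtain ⟨M, hM⟩ := hbdd
  have hgeom : ∀ n, f n = r ^ n * f 0 := by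
    intro n
    induction n with
    | zero => simp
    | succ n ih => rw [hf, ih, pow_succ]; ring
  by_contra! hr
  obtain ⟨n, hn⟩ := pow_unbounded_of_one_lt (M / f 0) hr
  have : M < f n := by rw [hgeom, ← div_lt_iff₀ h0]; exact hn
  exact this.not_ge (hM ⟨n, rfl⟩)

theorem periodic_two_of_periodic_mul_succ {α : ℕ → ℝ} (hpos : ∀ j, 0 < α j)
    (hbdd : BddAbove (Set.range α)) (h : Function.Periodic (fun j => α j * α (j + 1)) 2) :
    Function.Periodic α 2 := by
  set ρ : ℕ → ℝ := fun j => α (j + 2) / α j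
  have hρ_pos (j : ℕ) : 0 < ρ j := div_pos (hpos _) (hpos _)
  have hρ_mul (j : ℕ) : ρ j * ρ (j + 1) = 1 := by
    rw [div_mul_div_comm, div_eq_one_iff_eq (mul_pos (hpos _) (hpos _)).ne']
    exact h j
  have hρ_periodic : Function.Periodic ρ 2 := fun j =>
    mul_left_cancel₀ (hρ_pos (j + 1)).ne' <| by
      rw [mul_comm _ (ρ j)]; exact (hρ_mul (j + 1)).trans (hρ_mul j).symm
  have hρ_le (j : ℕ) : ρ j ≤ 1 := by
    refine le_one_of_geometric_bddAbove (f := fun k => α (j + k * 2)) (by simpa using hpos j)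
      (fun k => ?_) (hbdd.mono (Set.range_comp_subset_range _ α))
    have hk : ρ (j + k * 2) = ρ j := by simpa using hρ_periodic.nat_mul k j
    rw [← hk, div_mul_cancel₀ _ (hpos _).ne']
    ring_nf
  intro j
  have : 1 ≤ ρ j := by nlinarith [hρ_mul j, hρ_le (j + 1), hρ_pos j]
  exact (div_eq_one_iff_eq (hpos j).ne').mp ((hρ_le j).antisymm this)

local notation "ℓ²" => lp (fun _ : ℕ => ℂ) 2

theorem norm_e (j : ℕ) : ‖e j‖ = 1 := by
  simp [e, lp.norm_single]

theorem e_ne_zero (j : ℕ) : e j ≠ 0 :=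
  norm_ne_zero_iff.mp (by simp [norm_e])

theorem e_apply (j k : ℕ) : e j k = if k = j then 1 else 0 := by
  simp [e, lp.single_apply, Pi.single_apply]

theorem apply_eq_inner_e (f : ℓ²) (k : ℕ) : f k = inner ℂ (e k) f := by
  simp [e, lp.inner_single_left]

section WeightedShift

variable {T : ℓ² →L[ℂ] ℓ²} {c : ℕ → ℂ} {m : ℕ}

theorem norm_weight_le_opNorm (hT : ∀ j, T (e j) = c j • e (j + m)) (j : ℕ) :
    ‖c j‖ ≤ ‖T‖ := by
  simpa [hT, norm_smul, norm_e] using T.le_opNorm (e j)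

theorem sq_apply_e (hT : ∀ j, T (e j) = c j • e (j + 1)) (j : ℕ) :
    (T ^ 2) (e j) = (c j * c (j + 1)) • e (j + 2) := by
  rw [pow_two, mul_apply_eq_comp, hT, map_smul, hT, smul_smul]

theorem star_mul_self_apply_e (hT : ∀ j, T (e j) = c j • e (j + m)) (j : ℕ) :
    (star T * T) (e j) = (‖c j‖ : ℂ) ^ 2 • e j := by
  ext k
  rw [apply_eq_inner_e, mul_apply_eq_comp, ContinuousLinearMap.star_eq_adjoint,
    ContinuousLinearMap.adjoint_inner_right, hT, hT, inner_smul_left, inner_smul_right,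
    ← apply_eq_inner_e, lp.coeFn_smul, Pi.smul_apply, e_apply, e_apply]
  rcases eq_or_ne k j with rfl | hkj
  · simp [Complex.conj_mul']
  · simp [hkj]

theorem norm_weight_add_eq_of_commute (hT : ∀ j, T (e j) = c j • e (j + m))
    (hq : Commute T (star T * T)) {j : ℕ} (hc : c j ≠ 0) : ‖c (j + m)‖ = ‖c j‖ := by
  have h : T ((star T * T) (e j)) = (star T * T) (T (e j)) := DFunLike.congr_fun hq.eq (e j)
  rw [star_mul_self_apply_e hT, map_smul, hT, map_smul, star_mul_self_apply_e hT, smul_smul,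
    smul_smul] at h
  have hcoeff := smul_left_injective ℂ (e_ne_zero _) h
  have hsq : (‖c (j + m)‖ : ℂ) ^ 2 = (‖c j‖ : ℂ) ^ 2 :=
    mul_left_cancel₀ hc (by rw [← hcoeff]; ring)
  exact (pow_left_inj₀ (norm_nonneg _) (norm_nonneg _) two_ne_zero).mp (by exact_mod_cast hsq)

end WeightedShift

theorem weights_periodic_of_sq_quasinormal
    (α : ℕ → ℝ) (hpos : ∀ j, 0 < α j)
    (W : lp (fun _ : ℕ => ℂ) 2 →L[ℂ] lp (fun _ : ℕ => ℂ) 2)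
    (hW : ∀ j : ℕ, W (e j) = (α j : ℂ) • e (j + 1))
    (hq : W ^ 2 * (star (W ^ 2) * W ^ 2) = (star (W ^ 2) * W ^ 2) * W ^ 2) :
    ∀ j : ℕ, α (j + 2) = α j := by
  have hβ : Function.Periodic (fun j => α j * α (j + 1)) 2 := fun j => by
    have hne : (α j : ℂ) * α (j + 1) ≠ 0 := by exact_mod_cast (mul_pos (hpos j) (hpos _)).ne'
    simpa [abs_of_pos (hpos _)] using norm_weight_add_eq_of_commute (sq_apply_e hW) hq hne
  refine periodic_two_of_periodic_mul_succ hpos ⟨‖W‖, ?_⟩ hβ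
  rintro _ ⟨j, rfl⟩
  simpa [abs_of_pos (hpos j)] using norm_weight_le_opNorm hW j
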